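/- Let Δ ⊂ ℤ² be a finite set containing the origin, let x be a site on the left side of Δ and y a site on the right side of Δ. Then every *path from x to y avoiding Δ has nonzero winding number around the origin; consequently, for every configuration σ, there exists a 1*path from x to y avoiding Δ if and only if there exists a clockwise 1*path from x to y in Δᶜ or a counterclockwise 1*path from x to y in Δᶜ. -/

import Mathlib

open MeasureTheory ProbabilityTheory
open scoped ENNReal

namespace Percolation

/-- Sites of the square lattice. -/
abbrev Site : Type := ℤ × ℤ

/-- Configurations: spins `0`/`1` encoded as `false`/`true`. -/
abbrev Config : Type := Site → Bool

/-- Nearest-neighbour adjacency: Euclidean distance `1`. -/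
def adj (x y : Site) : Prop :=
  (x.1 - y.1) ^ 2 + (x.2 - y.2) ^ 2 = 1

/-- `*`adjacency: Euclidean distance `1` or `√2`. -/
def adjStar (x y : Site) : Prop :=
  x ≠ y ∧ |x.1 - y.1| ≤ 1 ∧ |x.2 - y.2| ≤ 1

/-- `x` and `y` are joined inside `G` by a path whose consecutive sites satisfy `R`. -/
def JoinedIn (R : Site → Site → Prop) (G : Set Site) (x y : Site) : Prop :=
  ∃ P : List Site, P.Chain' R ∧ (∀ z ∈ P, z ∈ G) ∧ P.head? = some x ∧ P.getLast? = some y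

/-- `S` is a `0`cluster of `σ`: a maximal `adj`-connected subset of `σ⁻¹(0)`. -/
def IsCluster0 (σ : Config) (S : Set Site) : Prop :=
  S.Nonempty ∧ (∀ z ∈ S, σ z = false) ∧
    (∀ x ∈ S, ∀ y ∈ S, JoinedIn adj S x y) ∧
    (∀ x ∈ S, ∀ y : Site, adj x y → σ y = false → y ∈ S)

/-- `S` is a `1*`cluster of `σ`: a maximal `adjStar`-connected subset of `σ⁻¹(1)`. -/
def IsCluster1 (σ : Config) (S : Set Site) : Prop :=
  S.Nonempty ∧ (∀ z ∈ S, σ z = true) ∧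
    (∀ x ∈ S, ∀ y ∈ S, JoinedIn adjStar S x y) ∧
    (∀ x ∈ S, ∀ y : Site, adjStar x y → σ y = true → y ∈ S)

/-- `x` belongs to an infinite `1*`cluster of `σ`. -/
def InInfinite1 (σ : Config) (x : Site) : Prop :=
  ∃ S : Set Site, IsCluster1 σ S ∧ S.Infinite ∧ x ∈ S

/-- There is exactly one infinite `0`cluster. -/
def UniqueInfinite0 (σ : Config) : Prop :=
  ∃! S : Set Site, IsCluster0 σ S ∧ S.Infinite

/-- There is exactly one infinite `1*`cluster. -/
def UniqueInfinite1 (σ : Config) : Prop :=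
  ∃! S : Set Site, IsCluster1 σ S ∧ S.Infinite

/-- There is at most one infinite `1*`cluster. -/
def AtMostOneInfinite1 (σ : Config) : Prop :=
  ∀ S T : Set Site, IsCluster1 σ S → S.Infinite → IsCluster1 σ T → T.Infinite → S = T

/-- An infinite `1*`cluster exists. -/
def ExistsInfinite1 (σ : Config) : Prop := ∃ S : Set Site, IsCluster1 σ S ∧ S.Infinite

/-- An infinite `0`cluster exists. -/
def ExistsInfinite0 (σ : Config) : Prop := ∃ S : Set Site, IsCluster0 σ S ∧ S.Infinite

/-- An increasing event. -/
def IncreasingEvent (A : Set Config) : Prop :=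
  ∀ ⦃ξ η : Config⦄, ξ ∈ A → ξ ≤ η → η ∈ A

/-- Positive association: increasing events are positively correlated. -/
def PositivelyAssociated (μ : Measure Config) : Prop :=
  ∀ A B : Set Config, MeasurableSet A → MeasurableSet B →
    IncreasingEvent A → IncreasingEvent B → μ A * μ B ≤ μ (A ∩ B)

/-- The cylinder event "`η` on `Δ`". -/
def cylEvent (Δ : Finset Site) (η : Site → Bool) : Set Config :=
  {σ | ∀ z ∈ Δ, σ z = η z}

/-- The σ-algebra generated by the spins outside `Δ`. -/
def outsideAlgebra (Δ : Finset Site) : MeasurableSpace Config :=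
  MeasurableSpace.comap (fun σ (z : {z : Site // z ∉ Δ}) => σ z.1) inferInstance

/-- The bounded energy condition: `μ(η on Δ | ξ off Δ) ≥ c_{|Δ|}` for a.e. `ξ`, expressed
via integrated conditional probabilities against events of the outside σ-algebra. -/
def BoundedEnergy (μ : Measure Config) : Prop :=
  ∀ n : ℕ, ∃ c : ℝ≥0∞, 0 < c ∧
    ∀ Δ : Finset Site, Δ.card = n → ∀ η : Site → Bool,
      ∀ B : Set Config, MeasurableSet[outsideAlgebra Δ] B →
        c * μ B ≤ μ (cylEvent Δ η ∩ B)

/-- The finite energy condition: `μ(η on Δ | ξ off Δ) > 0` for a.e. `ξ`, expressed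
via integrated conditional probabilities against events of the outside σ-algebra. -/
def FiniteEnergy (μ : Measure Config) : Prop :=
  ∀ (Δ : Finset Site) (η : Site → Bool) (B : Set Config),
    MeasurableSet[outsideAlgebra Δ] B → 0 < μ B → 0 < μ (cylEvent Δ η ∩ B)

/-- The tail σ-algebra. -/
def tailAlgebra : MeasurableSpace Config :=
  ⨅ Δ : Finset Site, outsideAlgebra Δ

/-- Translation of configurations by `v`. -/
def shift (v : Site) (σ : Config) : Config := fun z => σ (z + v)

/-- A site viewed as a complex number. -/
noncomputable def toC (z : Site) : ℂ := (z.1 : ℂ) + (z.2 : ℂ) * Complex.I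

/-- Winding number around the origin of the polygonal curve through the sites of `P`. -/
noncomputable def winding (P : List Site) : ℝ :=
  (1 / (2 * Real.pi)) *
    ((P.zip P.tail).map fun p => Complex.arg (toC p.2 / toC p.1)).sum

/-- Winding number of `P` around the site `w`. -/
noncomputable def windingAround (P : List Site) (w : Site) : ℝ :=
  winding (P.map fun z => z - w)

/-- The site `w` lies in the interior of the circuit `C`, i.e. is enclosed by `C`. -/
def circuitEncloses (C : List Site) (w : Site) : Prop :=
  w ∉ C ∧ windingAround (C ++ C.take 1) w ≠ 0

/-- A circuit: a path whose starting site is adjacent to its ending site. -/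
def IsCircuit (C : List Site) : Prop :=
  C.Chain' adj ∧ ∃ h : C ≠ [], adj (C.getLast h) (C.head h)

/-- A `*`circuit: a `*`path whose starting site is `*`adjacent to its ending site. -/
def IsStarCircuit (C : List Site) : Prop :=
  C.Chain' adjStar ∧ ∃ h : C ≠ [], adjStar (C.getLast h) (C.head h)

/-- A (finite) `1*`path with respect to `σ`. -/
def Is1StarPath (σ : Config) (P : List Site) : Prop :=
  P ≠ [] ∧ P.Chain' adjStar ∧ ∀ z ∈ P, σ z = true

/-- A (finite) `0`path with respect to `σ`. -/
def Is0Path (σ : Config) (P : List Site) : Prop :=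
  P ≠ [] ∧ P.Chain' adj ∧ ∀ z ∈ P, σ z = false

/-- A `1*`circuit with respect to `σ`. -/
def Is1StarCircuit (σ : Config) (C : List Site) : Prop :=
  IsStarCircuit C ∧ ∀ z ∈ C, σ z = true

/-- A `0`circuit with respect to `σ`. -/
def Is0Circuit (σ : Config) (C : List Site) : Prop :=
  IsCircuit C ∧ ∀ z ∈ C, σ z = false

/-- `C` is a circuit around `Δ`: every site of `Δ` is enclosed by `C`. -/
def CircuitAround (C : List Site) (Δ : Set Site) : Prop :=
  ∀ z ∈ Δ, circuitEncloses C z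

/-- A mixed circuit with respect to `σ`: a self-avoiding `*`circuit consisting of a
self-avoiding `1*`path followed by a self-avoiding `0`path (either part may be empty). -/
def IsMixedCircuit (σ : Config) (C : List Site) : Prop :=
  ∃ P Q : List Site, C = P ++ Q ∧ C.Nodup ∧
    P.Chain' adjStar ∧ Q.Chain' adj ∧
    (∀ z ∈ P, σ z = true) ∧ (∀ z ∈ Q, σ z = false) ∧ IsStarCircuit C

/-- `z` lies in the exterior of the circuit `C`. -/
def InExterior (C : List Site) (z : Site) : Prop :=
  z ∉ C ∧ ¬ circuitEncloses C z

/-- An infinite self-avoiding `1*`path with respect to `σ`. -/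
def IsInfSA1StarPath (σ : Config) (f : ℕ → Site) : Prop :=
  Function.Injective f ∧ (∀ i, adjStar (f i) (f (i + 1))) ∧ ∀ i, σ (f i) = true

/-- An infinite self-avoiding `0`path with respect to `σ`. -/
def IsInfSA0Path (σ : Config) (f : ℕ → Site) : Prop :=
  Function.Injective f ∧ (∀ i, adj (f i) (f (i + 1))) ∧ ∀ i, σ (f i) = false

/-- There exist `n` pairwise disjoint infinite self-avoiding `1*`paths. -/
def HasNDisjoint1 (σ : Config) (n : ℕ) : Prop :=
  ∃ f : Fin n → ℕ → Site, (∀ i, IsInfSA1StarPath σ (f i)) ∧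
    ∀ i j, i ≠ j → Disjoint (Set.range (f i)) (Set.range (f j))

/-- A two-sided infinite self-avoiding `1*`path with respect to `σ`. -/
def IsTwoSidedInf1 (σ : Config) (f : ℤ → Site) : Prop :=
  Function.Injective f ∧ (∀ i : ℤ, adjStar (f i) (f (i + 1))) ∧ ∀ i : ℤ, σ (f i) = true

/-- A `1*`path of `σ` from `x` to `y` avoiding `Δ`. -/
def starPathBetweenAvoiding (σ : Config) (Δ : Set Site) (x y : Site) (P : List Site) : Prop :=
  Is1StarPath σ P ∧ P.head? = some x ∧ P.getLast? = some y ∧ ∀ z ∈ P, z ∉ Δ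

/-- `x` is on the left side of `Γ`. -/
def OnLeftSide (x : Site) (Γ : Set Site) : Prop :=
  ∃ d : ℕ, 0 < d ∧ (∀ z ∈ Γ, |z.1| ≤ (d : ℤ) ∧ |z.2| ≤ (d : ℤ)) ∧ x.1 ≤ -(d : ℤ)

/-- `x` is on the right side of `Γ`. -/
def OnRightSide (x : Site) (Γ : Set Site) : Prop :=
  ∃ d : ℕ, 0 < d ∧ (∀ z ∈ Γ, |z.1| ≤ (d : ℤ) ∧ |z.2| ≤ (d : ℤ)) ∧ (d : ℤ) ≤ x.1

/-- The square `{-n, …, n}²`. -/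
def square (n : ℕ) : Set Site := {z : Site | |z.1| ≤ (n : ℤ) ∧ |z.2| ≤ (n : ℤ)}

/-- The `*`boundary `∂*B` of a set of sites. -/
def starBoundary (B : Set Site) : Set Site :=
  {x | x ∉ B ∧ ∃ y ∈ B, adjStar x y}

/-- The union of all infinite `1*`clusters of `σ`. -/
def InfinitePart1 (σ : Config) : Set Site := {z | InInfinite1 σ z}

/-- The filled infinite `1*`cluster `S₁*`: the infinite `1*`cluster together with all
finite `0`clusters `*`encircled by it. -/
def Fill (σ : Config) : Set Site :=
  InfinitePart1 σ ∪
    {z | ∃ F : Set Site, IsCluster0 σ F ∧ F.Finite ∧ z ∈ F ∧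
      ∃ C : List Site, IsStarCircuit C ∧ (∀ w ∈ C, w ∈ InfinitePart1 σ) ∧
        ∀ w ∈ F, circuitEncloses C w}

/-- The indicator of the filled infinite `1*`cluster, as a point of `{0,1}^{ℤ²}`. -/
noncomputable def fillInd (σ : Config) : Site → Bool :=
  fun z => @decide (z ∈ Fill σ) (Classical.propDecidable _)

/-- Exactly one infinite `0`cluster and exactly one infinite `1*`cluster coexist. -/
def CoexistUnique (σ : Config) : Prop := UniqueInfinite0 σ ∧ UniqueInfinite1 σ

open Real

/-! Each step of a path turns the argument by `arg (z_{i+1} / z_i)`, which agrees with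
`arg z_{i+1} - arg z_i` modulo `2π`. Hence `2π W(P) ≡ arg y - arg x`, so `W(P) = 0` would force
`arg x = arg y`; but the left site `x` has negative and the right site `y` positive real part. -/

theorem _root_.List.sum_map_zip_tail_sub {α G : Type*} [AddCommGroup G] (f : α → G) :
    ∀ (l : List α) {x y : α}, l.head? = some x → l.getLast? = some y →
      ((l.zip l.tail).map fun p => f p.2 - f p.1).sum = f y - f x
  | [], _, _, hx, _ => by simp at hx
  | [a], _, _, hx, hy => by simp_all
  | a :: b :: l, x, y, hx, hy => by
    obtain rfl : a = x := by simpa using hx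
    rw [List.getLast?_cons_cons] at hy
    have ih := List.sum_map_zip_tail_sub f (b :: l) rfl hy
    simp only [List.tail_cons, List.zip_cons_cons, List.map_cons, List.sum_cons] at ih ⊢
    rw [ih]
    abel

theorem _root_.Complex.arg_ne_arg_of_re_neg_of_re_pos {z w : ℂ} (hz : z.re < 0)
    (hw : 0 < w.re) : Complex.arg z ≠ Complex.arg w := by
  intro h
  have hz' : π / 2 < |Complex.arg z| := by
    rw [← not_le, Complex.abs_arg_le_pi_div_two_iff]
    exact hz.not_ge
  have hw' : |Complex.arg w| < π / 2 := Complex.abs_arg_lt_pi_div_two_iff.2 (Or.inl hw)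
  rw [h] at hz'
  linarith

theorem toC_ne_zero {z : Site} (hz : z ≠ 0) : toC z ≠ 0 := by
  contrapose! hz
  obtain ⟨h₁, h₂⟩ : (z.1 : ℝ) = 0 ∧ (z.2 : ℝ) = 0 := by simpa [toC, Complex.ext_iff] using hz
  exact Prod.ext (by exact_mod_cast h₁) (by exact_mod_cast h₂)

@[simp]
theorem toC_re (z : Site) : (toC z).re = z.1 := by
  simp [toC]

theorem coe_two_pi_mul_winding {P : List Site} {x y : Site} (hP : ∀ z ∈ P, z ≠ 0)
    (hx : P.head? = some x) (hy : P.getLast? = some y) :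
    ((2 * π * winding P : ℝ) : Real.Angle) = Complex.arg (toC y) - Complex.arg (toC x) := by
  have hsum : 2 * π * winding P =
      ((P.zip P.tail).map fun p => Complex.arg (toC p.2 / toC p.1)).sum := by
    unfold winding
    field_simp
  rw [hsum, ← List.sum_map_zip_tail_sub (fun z => (Complex.arg (toC z) : Real.Angle)) P hx hy,
    ← Real.Angle.coe_coeHom, map_list_sum, List.map_map]
  congr 1
  refine List.map_congr_left fun p hp => ?_
  obtain ⟨hp₁, hp₂⟩ := List.of_mem_zip hp
  exact Complex.arg_div_coe_angle (toC_ne_zero (hP _ (List.mem_of_mem_tail hp₂)))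
    (toC_ne_zero (hP _ hp₁))

theorem winding_ne_zero_of_arg_ne {P : List Site} {x y : Site} (hP : ∀ z ∈ P, z ≠ 0)
    (hx : P.head? = some x) (hy : P.getLast? = some y)
    (hxy : Complex.arg (toC x) ≠ Complex.arg (toC y)) : winding P ≠ 0 := by
  intro hw
  have h := coe_two_pi_mul_winding hP hx hy
  rw [hw, mul_zero, Real.Angle.coe_zero, eq_comm, sub_eq_zero,
    Complex.arg_coe_angle_eq_iff] at h
  exact hxy h.symm

theorem OnLeftSide.fst_neg {x : Site} {Γ : Set Site} (hx : OnLeftSide x Γ) : x.1 < 0 := by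
  obtain ⟨d, hd, -, hxd⟩ := hx
  omega

theorem OnRightSide.fst_pos {y : Site} {Γ : Set Site} (hy : OnRightSide y Γ) : 0 < y.1 := by
  obtain ⟨d, hd, -, hyd⟩ := hy
  omega

/-- Every `*`path from a site on the left side of `Δ` to a site on the right side of `Δ`
avoiding `Δ` (which contains the origin) has nonzero winding number; consequently a
`1*`path from `x` to `y` off `Δ` exists iff a clockwise or a counterclockwise one does. -/
theorem statement13 (Δ : Finset Site) (hΔ : ((0 : ℤ), (0 : ℤ)) ∈ Δ) (x y : Site)
    (hx : OnLeftSide x ↑Δ) (hy : OnRightSide y ↑Δ) :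
    (∀ P : List Site, P ≠ [] → P.Chain' adjStar → P.head? = some x →
      P.getLast? = some y → (∀ z ∈ P, z ∉ Δ) → winding P ≠ 0) ∧
    (∀ σ : Config,
      (∃ P : List Site, starPathBetweenAvoiding σ ↑Δ x y P) ↔
        ((∃ P : List Site, starPathBetweenAvoiding σ ↑Δ x y P ∧ winding P < 0) ∨
         (∃ P : List Site, starPathBetweenAvoiding σ ↑Δ x y P ∧ 0 < winding P))) := by
  have hxy : Complex.arg (toC x) ≠ Complex.arg (toC y) :=
    Complex.arg_ne_arg_of_re_neg_of_re_pos (by simpa using hx.fst_neg) (by simpa using hy.fst_pos)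
  have key : ∀ P : List Site, P ≠ [] → P.Chain' adjStar → P.head? = some x →
      P.getLast? = some y → (∀ z ∈ P, z ∉ Δ) → winding P ≠ 0 :=
    fun P _ _ hhead hlast hP =>
      winding_ne_zero_of_arg_ne (fun z hz h0 => hP z hz (h0 ▸ hΔ)) hhead hlast hxy
  refine ⟨key, fun σ => ⟨?_, ?_⟩⟩
  · rintro ⟨P, hP⟩
    have ⟨⟨hne, hchain, _⟩, hhead, hlast, havoid⟩ := hP
    exact (key P hne hchain hhead hlast havoid).lt_or_gt.imp
      (fun h => ⟨P, hP, h⟩) (fun h => ⟨P, hP, h⟩)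
  · rintro (⟨P, hP, -⟩ | ⟨P, hP, -⟩) <;> exact ⟨P, hP⟩

end Percolation
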